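/- Let r_1,...,r_k be positive reals, m, d positive integers, and S = { Σ_i r_i n_i / m : n_i ∈ ℤ, n_i ≥ -2dm }. If S contains at least one positive element, then ħ = inf { s ∈ S : s > 0 } is positive and is attained, i.e. ħ ∈ S and ħ > 0; consequently no element of S lies in the open interval (0, ħ). -/
import Mathlib


theorem stmt_1 (k : ℕ) (r : Fin k → ℝ) (hr : ∀ i, 0 < r i) (m d : ℕ)
    (hm : 0 < m) (hd : 0 < d) (S : Set ℝ)
    (hS : S = {x : ℝ | ∃ n : Fin k → ℤ, (∀ i, -(2 * (d : ℤ) * (m : ℤ)) ≤ n i) ∧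
      x = ∑ i, r i * (n i : ℝ) / (m : ℝ)})
    (hpos : ∃ s ∈ S, 0 < s) :
    0 < sInf {s ∈ S | 0 < s} ∧ sInf {s ∈ S | 0 < s} ∈ S ∧
      ∀ s ∈ S, s ∉ Set.Ioo 0 (sInf {s ∈ S | 0 < s}) := by
  obtain ⟨s₀, hs₀S, hs₀pos⟩ := hpos
  set T : Set ℝ := {s ∈ S | 0 < s} with hT
  have hmR : (0:ℝ) < m := by exact_mod_cast hm
  set C : ℝ := s₀ + ∑ j, 2 * d * r j with hC
  set T' : Set ℝ := {s ∈ T | s ≤ s₀} with hT'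
  have hT'fin : T'.Finite := by
    have hfin : (Set.pi Set.univ fun i : Fin k =>
        Set.Icc (-(2*(d:ℤ)*(m:ℤ))) ⌈C * (m:ℝ) / r i⌉).Finite :=
      Set.Finite.pi fun i => Set.finite_Icc _ _
    refine (hfin.image (fun n : Fin k → ℤ => ∑ i, r i * (n i : ℝ) / m)).subset ?_
    rintro s ⟨⟨hsS, hspos⟩, hsle⟩
    rw [hS] at hsS
    obtain ⟨n, hn, rfl⟩ := hsS
    refine ⟨n, fun i _ => ⟨hn i, ?_⟩, rfl⟩
    -- each term plus 2*d*r j is nonnegative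
    have h1 : ∀ j, 0 ≤ r j * (n j : ℝ) / m + 2 * d * r j := by
      intro j
      have hnj : (-(2*(d:ℝ)*m)) ≤ (n j:ℝ) := by exact_mod_cast hn j
      have h2 : r j * (-(2*(d:ℝ)*m)) / m ≤ r j * (n j : ℝ) / m := by
        gcongr
        exact (hr j).le
      have h3 : r j * (-(2*(d:ℝ)*m)) / m = -(2 * d * r j) := by
        field_simp
      linarith [h2, h3 ▸ h2]
    have key : r i * (n i : ℝ) / m ≤ C := by
      have h4 : r i * (n i : ℝ) / m + 2 * d * r i ≤
          ∑ j, (r j * (n j : ℝ) / m + 2 * d * r j) :=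
        Finset.single_le_sum (fun j _ => h1 j) (Finset.mem_univ i)
      have h5 : ∑ j, (r j * (n j : ℝ) / m + 2 * d * r j)
          = (∑ j, r j * (n j : ℝ) / m) + ∑ j, 2 * d * r j := by
        rw [Finset.sum_add_distrib]
      have h6 : 0 ≤ 2 * (d:ℝ) * r i := mul_nonneg (by positivity) (hr i).le
      have := h1 i
      rw [h5] at h4
      rw [hC]
      linarith
    -- deduce integer bound
    have h7 : (n i : ℝ) ≤ C * m / r i := by
      rw [le_div_iff₀ (hr i)]
      rw [div_le_iff₀ hmR] at key
      linarith
    have h8 : (n i : ℝ) ≤ (⌈C * (m:ℝ) / r i⌉ : ℝ) := h7.trans (Int.le_ceil _)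
    exact_mod_cast h8
  have hs₀T : s₀ ∈ T := ⟨hs₀S, hs₀pos⟩
  have hT'ne : T'.Nonempty := ⟨s₀, hs₀T, le_refl _⟩
  have hμmem : sInf T' ∈ T' := hT'ne.csInf_mem hT'fin
  obtain ⟨⟨hμS, hμpos⟩, hμle⟩ := hμmem
  have hlb : ∀ t ∈ T, sInf T' ≤ t := by
    intro t ht
    by_cases h : t ≤ s₀
    · exact csInf_le hT'fin.bddBelow ⟨ht, h⟩
    · linarith [hμle]
  have hSinf : sInf T = sInf T' := by
    refine le_antisymm (csInf_le ⟨0, fun x hx => hx.2.le⟩ ⟨hμS, hμpos⟩)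
      (le_csInf ⟨s₀, hs₀T⟩ hlb)
  rw [hT] at hSinf
  rw [hSinf]
  refine ⟨hμpos, hμS, ?_⟩
  intro s hsS hsIoo
  have : sInf T' ≤ s := hlb s ⟨hsS, hsIoo.1⟩
  exact absurd hsIoo.2 (not_lt.mpr this)
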